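/- For the four-dimensional perfect-fluid system with γ ∈ (1,2) and C₂ > 0, the point (Σ,A,K,v) = (0,0,1,0) is an equilibrium of the system Σ' , A', K', v' (equations (3.29) with Ωₜ substituted from the constraint), and its linearization has eigenvalues {-2, -1, 1, 2}; since eigenvalues of both signs occur, it is a hyperbolic saddle. -/

import Mathlib

noncomputable section

def Omt (γ C₂ S A K v : ℝ) : ℝ :=
  ((γ - 1) * v ^ 2 + 1) * (1 - C₂ * S ^ 2 - C₂ * A ^ 2 - K) / (γ + v ^ 2 - 1)

def sqrt3r (γ C₂ S A K v : ℝ) : ℝ :=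
  S * (2 * C₂ * S + 1) + γ * Omt γ C₂ S A K v * v ^ 2 / ((γ - 1) * v ^ 2 + 1) + K

/-- The θ-normalized four-dimensional perfect-fluid vector field (equations (3.29)
with Ωₜ substituted from the constraint), in the variables `(Σ, A, K, v)`. -/
def Ffield (γ C₂ : ℝ) : ℝ × ℝ × ℝ × ℝ → ℝ × ℝ × ℝ × ℝ := fun p =>
  let S := p.1; let A := p.2.1; let K := p.2.2.1; let v := p.2.2.2
  (-S * (S - sqrt3r γ C₂ S A K v + 2) +
      Omt γ C₂ S A K v * (-3 * γ + (γ - 2) * v ^ 2 + 2) /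
        (2 * C₂ * ((γ - 1) * v ^ 2 + 1)),
   A * (S + sqrt3r γ C₂ S A K v),
   2 * K * (-S + sqrt3r γ C₂ S A K v - 1),
   (v ^ 2 - 1) / (γ * (γ - v ^ 2 - 1)) *
     (γ * v * (γ * S + 2 * γ - 2) + A * ((γ - 1) * (3 * γ - 2) + (γ - 2) * v ^ 2)))

/-!
At `N₁ = (0, 0, 1, 0)` both the constraint factor `1 - C₂Σ² - C₂A² - K` and the bracket in `v'`
vanish, so to first order `Ωₜ ≈ -δK / (γ - 1)` and `√3 r ≈ δΣ + δK`. The linearization is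
therefore `(δΣ, δA, δK, δv) ↦ (-δΣ + (3γ - 2) δK / (2C₂(γ - 1)), δA, 2 δK, -2 δv - (3γ - 2) δA / γ)`,
which is triangular with diagonal `(-1, 1, 2, -2)`. It is obtained as the derivative of `Ffield`
along each line through `N₁`, which is `fderiv` applied to the direction since `Ffield` is
differentiable there.
-/

theorem Module.End.hasEigenvalue_fderiv_of_hasLineDerivAt {𝕜 E : Type*}
    [NontriviallyNormedField 𝕜] [NormedAddCommGroup E] [NormedSpace 𝕜 E] {f : E → E} {x v : E}
    {μ : 𝕜} (hf : DifferentiableAt 𝕜 f x) (hv : v ≠ 0) (h : HasLineDerivAt 𝕜 f (μ • v) x v) :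
    HasEigenvalue (fderiv 𝕜 f x).toLinearMap μ :=
  hasEigenvalue_of_hasEigenvector
    ⟨mem_eigenspace_iff.mpr (hf.lineDeriv_eq_fderiv.symm.trans h.lineDeriv), hv⟩

lemma hasDerivAt_mul_const_sq {𝕜 : Type*} [NontriviallyNormedField 𝕜] (c : 𝕜) :
    HasDerivAt (fun t : 𝕜 => (t * c) ^ 2) 0 0 := by
  simpa using (hasDerivAt_mul_const (x := (0 : 𝕜)) c).fun_pow 2

def linearizationN1 (γ C₂ : ℝ) (w : ℝ × ℝ × ℝ × ℝ) : ℝ × ℝ × ℝ × ℝ :=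
  (-w.1 + (3 * γ - 2) / (2 * C₂ * (γ - 1)) * w.2.2.1, w.2.1, 2 * w.2.2.1,
    -2 * w.2.2.2 - (3 * γ - 2) / γ * w.2.1)

section Linearization

variable {γ C₂ : ℝ}

lemma differentiableAt_Ffield (hγ : 1 < γ) (hC : C₂ ≠ 0) :
    DifferentiableAt ℝ (Ffield γ C₂) (0, 0, 1, 0) := by
  have hγ0 : γ ≠ 0 := by linarith
  have hγ1 : γ - 1 ≠ 0 := by linarith
  unfold Ffield sqrt3r Omt
  simp only [div_eq_mul_inv]
  fun_prop (disch := simp [hC, hγ0, hγ1])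

lemma hasDerivAt_Omt_line (a b k d : ℝ) (hγ : 1 < γ) :
    HasDerivAt (fun t => Omt γ C₂ (t * a) (t * b) (1 + t * k) (t * d)) (-k / (γ - 1)) 0 := by
  have hγ1 : γ - 1 ≠ 0 := by linarith
  have hN := ((hasDerivAt_mul_const_sq d).const_mul (γ - 1)).add_const 1
  have hB := (((hasDerivAt_const (0 : ℝ) (1 : ℝ)).sub
    ((hasDerivAt_mul_const_sq a).const_mul C₂)).sub ((hasDerivAt_mul_const_sq b).const_mul C₂)).sub
    ((hasDerivAt_mul_const (x := 0) k).const_add 1)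
  have hQ := ((hasDerivAt_mul_const_sq d).const_add γ).sub_const 1
  exact ((hN.mul hB).div hQ (by simpa using hγ1)).congr_deriv (by simp; field_simp)

lemma hasDerivAt_sqrt3r_line (a b k d : ℝ) (hγ : 1 < γ) :
    HasDerivAt (fun t => sqrt3r γ C₂ (t * a) (t * b) (1 + t * k) (t * d)) (a + k) 0 := by
  have hS := (hasDerivAt_mul_const (x := 0) a).mul
    (((hasDerivAt_mul_const (x := 0) a).const_mul (2 * C₂)).add_const 1)
  have hR := ((hasDerivAt_Omt_line (C₂ := C₂) a b k d hγ).const_mul γ).mul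
    (hasDerivAt_mul_const_sq d)
  have hQ := ((hasDerivAt_mul_const_sq d).const_mul (γ - 1)).add_const 1
  exact ((hS.add (hR.div hQ (by simp))).add
    ((hasDerivAt_mul_const (x := 0) k).const_add 1)).congr_deriv (by simp)

lemma hasLineDerivAt_Ffield (hγ : 1 < γ) (hC : C₂ ≠ 0) (w : ℝ × ℝ × ℝ × ℝ) :
    HasLineDerivAt ℝ (Ffield γ C₂) (linearizationN1 γ C₂ w) (0, 0, 1, 0) w := by
  obtain ⟨a, b, k, d⟩ := w
  have hline : (fun t : ℝ => Ffield γ C₂ ((0, 0, 1, 0) + t • (a, b, k, d))) =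
      fun t => Ffield γ C₂ (t * a, t * b, 1 + t * k, t * d) := by
    funext t; simp
  unfold HasLineDerivAt; rw [hline]
  have hγ0 : γ ≠ 0 := by linarith
  have hγ1 : γ - 1 ≠ 0 := by linarith
  have hS := hasDerivAt_mul_const (x := (0 : ℝ)) a
  have hA := hasDerivAt_mul_const (x := (0 : ℝ)) b
  have hK := (hasDerivAt_mul_const (x := (0 : ℝ)) k).const_add 1
  have hv := hasDerivAt_mul_const (x := (0 : ℝ)) d
  have hv2 := hasDerivAt_mul_const_sq d
  have hΩ := hasDerivAt_Omt_line (C₂ := C₂) a b k d hγ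
  have hr := hasDerivAt_sqrt3r_line (C₂ := C₂) a b k d hγ
  have hQ := (hv2.const_mul (γ - 1)).add_const 1
  have h1 := (hS.neg.mul ((hS.sub hr).add_const 2)).add
    ((hΩ.mul (((hv2.const_mul (γ - 2)).const_add (-3 * γ)).add_const 2)).div
      (hQ.const_mul (2 * C₂)) (by simpa using hC))
  have h2 := hA.mul (hS.add hr)
  have h3 := (hK.const_mul 2).mul ((hS.neg.add hr).sub_const 1)
  have h4 := ((hv2.sub_const 1).div
      ((((hasDerivAt_const (0 : ℝ) γ).sub hv2).sub_const 1).const_mul γ) (by simp [hγ0, hγ1])).mul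
    (((hv.const_mul γ).mul (((hS.const_mul γ).add_const (2 * γ)).sub_const 2)).add
      (hA.mul ((hv2.const_mul (γ - 2)).const_add ((γ - 1) * (3 * γ - 2)))))
  refine (h1.prodMk (h2.prodMk (h3.prodMk h4))).congr_deriv ?_
  simp [linearizationN1, sqrt3r, Omt]
  constructor <;> field_simp <;> ring

end Linearization

theorem N1_hyperbolic_saddle_general (γ C₂ : ℝ) (hγ₁ : 1 < γ) (hC : 0 < C₂) :
    Ffield γ C₂ (0, 0, 1, 0) = 0 ∧
    Module.End.HasEigenvalue ((fderiv ℝ (Ffield γ C₂) (0, 0, 1, 0)).toLinearMap) (-2) ∧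
    Module.End.HasEigenvalue ((fderiv ℝ (Ffield γ C₂) (0, 0, 1, 0)).toLinearMap) (-1) ∧
    Module.End.HasEigenvalue ((fderiv ℝ (Ffield γ C₂) (0, 0, 1, 0)).toLinearMap) 1 ∧
    Module.End.HasEigenvalue ((fderiv ℝ (Ffield γ C₂) (0, 0, 1, 0)).toLinearMap) 2 ∧
    (-2 : ℝ) < 0 ∧ (0 : ℝ) < 1 := by
  have hγ0 : γ ≠ 0 := by linarith
  have hγ1 : γ - 1 ≠ 0 := by linarith
  have eigen (μ : ℝ) (w : ℝ × ℝ × ℝ × ℝ) (hw : w ≠ 0) (hμ : linearizationN1 γ C₂ w = μ • w) :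
      Module.End.HasEigenvalue (fderiv ℝ (Ffield γ C₂) (0, 0, 1, 0)).toLinearMap μ :=
    Module.End.hasEigenvalue_fderiv_of_hasLineDerivAt (differentiableAt_Ffield hγ₁ hC.ne') hw
      (hμ ▸ hasLineDerivAt_Ffield hγ₁ hC.ne' w)
  refine ⟨by simp [Ffield, sqrt3r, Omt], ?_, ?_, ?_, ?_, by norm_num, by norm_num⟩
  · exact eigen (-2) (0, 0, 0, 1) (by simp) (by simp [linearizationN1])
  · exact eigen (-1) (1, 0, 0, 0) (by simp) (by simp [linearizationN1])
  · refine eigen 1 (0, 3 * γ, 0, 2 - 3 * γ) (by simp [hγ0]) ?_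
    simp [linearizationN1]
    field_simp
    ring
  · refine eigen 2 (3 * γ - 2, 0, 6 * C₂ * (γ - 1), 0) (by simp [hC.ne', hγ1]) ?_
    simp [linearizationN1]
    field_simp
    ring

/-- For `γ ∈ (1,2)` and `C₂ > 0`, the point `(Σ, A, K, v) = (0, 0, 1, 0)` is an
equilibrium whose linearization has eigenvalues `{-2, -1, 1, 2}`; eigenvalues of
both signs occur, so it is a hyperbolic saddle. -/
theorem N1_hyperbolic_saddle (γ C₂ : ℝ) (hγ₁ : 1 < γ) (hγ₂ : γ < 2) (hC : 0 < C₂) :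
    Ffield γ C₂ (0, 0, 1, 0) = 0 ∧
    Module.End.HasEigenvalue ((fderiv ℝ (Ffield γ C₂) (0, 0, 1, 0)).toLinearMap) (-2) ∧
    Module.End.HasEigenvalue ((fderiv ℝ (Ffield γ C₂) (0, 0, 1, 0)).toLinearMap) (-1) ∧
    Module.End.HasEigenvalue ((fderiv ℝ (Ffield γ C₂) (0, 0, 1, 0)).toLinearMap) 1 ∧
    Module.End.HasEigenvalue ((fderiv ℝ (Ffield γ C₂) (0, 0, 1, 0)).toLinearMap) 2 ∧
    (-2 : ℝ) < 0 ∧ (0 : ℝ) < 1 :=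
  N1_hyperbolic_saddle_general γ C₂ hγ₁ hC
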